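/- arXiv:1305.0731 — 2 statements merged into one kernel-verified Lean document; each statement's English description precedes it below -/
import Mathlib

section
/- Let P(h), E₊(h), E₋(h), R₊, R₋, E_±(h) be families of bounded operators (P on a Hilbert space H, E₊ : ℂ^d → H, E₋ : H → ℂ^d, R₋ : ℂ^d → H, R₊ : H → ℂ^d, E_± : ℂ^d → ℂ^d) with uniformly bounded norms ‖R₋‖, ‖R₊‖, ‖E₊‖ ≤ C. Suppose: (i) ‖P E₊ + R₋ E_±‖ ≤ C h^{N₀/2 + 3/2}, (ii) R₊E₊ = Id + O(h^{1/2}). If the a priori estimate ‖P u‖ ≥ c₀ h^{N₀/2 + 1} ‖u‖ holds for all u ∈ H and 0 < h ≤ h₀, then there exist c₁ > 0 and h₁ > 0 such that |E_± u₋| ≥ c₁ h^{N₀/2+1} |u₋| for all u₋ ∈ ℂ^d and 0 < h ≤ h₁. -/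
/-- Abstract Grushin-reduction step: if `‖P E₊ + R₋ E_±‖ = O(h^{N₀/2+3/2})`,
`R₊ E₊ = Id + O(h^{1/2})`, the norms of `R₋`, `R₊`, `E₊` are uniformly bounded,
and the a priori estimate `‖P u‖ ≥ c₀ h^{N₀/2+1} ‖u‖` holds, then
`|E_± um| ≥ c₁ h^{N₀/2+1} |um|` for small `h`. -/
theorem grushin_estimate_forward
    {H : Type*} [NormedAddCommGroup H] [NormedSpace ℂ H]
    (d : ℕ) (hd : 1 ≤ d) (N₀ : ℕ) (hN₀ : 1 ≤ N₀)
    (P : ℝ → (H →L[ℂ] H))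
    (Ep : ℝ → (EuclideanSpace ℂ (Fin d) →L[ℂ] H))
    (Em : ℝ → (H →L[ℂ] EuclideanSpace ℂ (Fin d)))
    (Rm : ℝ → (EuclideanSpace ℂ (Fin d) →L[ℂ] H))
    (Rp : ℝ → (H →L[ℂ] EuclideanSpace ℂ (Fin d)))
    (Epm : ℝ → (EuclideanSpace ℂ (Fin d) →L[ℂ] EuclideanSpace ℂ (Fin d)))
    (C : ℝ)
    (hRm : ∀ h ∈ Set.Ioc (0 : ℝ) 1, ‖Rm h‖ ≤ C)
    (hRp : ∀ h ∈ Set.Ioc (0 : ℝ) 1, ‖Rp h‖ ≤ C)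
    (hEp : ∀ h ∈ Set.Ioc (0 : ℝ) 1, ‖Ep h‖ ≤ C)
    (hi : ∀ h ∈ Set.Ioc (0 : ℝ) 1,
      ‖(P h).comp (Ep h) + (Rm h).comp (Epm h)‖
        ≤ C * h ^ ((N₀ : ℝ) / 2 + 3 / 2))
    (hii : ∀ h ∈ Set.Ioc (0 : ℝ) 1,
      ‖(Rp h).comp (Ep h) - ContinuousLinearMap.id ℂ (EuclideanSpace ℂ (Fin d))‖
        ≤ C * h ^ ((1 : ℝ) / 2))
    (c₀ h₀ : ℝ) (hc₀ : 0 < c₀) (hh₀ : h₀ ∈ Set.Ioc (0 : ℝ) 1)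
    (hapriori : ∀ h, 0 < h → h ≤ h₀ → ∀ u : H,
      c₀ * h ^ ((N₀ : ℝ) / 2 + 1) * ‖u‖ ≤ ‖P h u‖) :
    ∃ c₁ > 0, ∃ h₁ > 0, ∀ h, 0 < h → h ≤ h₁ →
      ∀ um : EuclideanSpace ℂ (Fin d),
        c₁ * h ^ ((N₀ : ℝ) / 2 + 1) * ‖um‖ ≤ ‖Epm h um‖ := by
  -- First, C > 0.
  have hC : 0 < C := by
    by_contra hCn
    push_neg at hCn
    have hEp0 : Ep h₀ = 0 := by
      have h1 := (hEp h₀ hh₀).trans hCn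
      simpa [norm_le_zero_iff] using h1
    have h2 := hii h₀ hh₀
    set e : EuclideanSpace ℂ (Fin d) := EuclideanSpace.single ⟨0, hd⟩ 1 with he
    have hne : ‖e‖ = 1 := by simp [he]
    have h3 : ‖((Rp h₀).comp (Ep h₀) - ContinuousLinearMap.id ℂ (EuclideanSpace ℂ (Fin d))) e‖
        ≤ C * h₀ ^ ((1:ℝ)/2) * ‖e‖ := by
      exact ((Rp h₀).comp (Ep h₀) - ContinuousLinearMap.id ℂ _).le_of_opNorm_le h2 e
    have h4 : ‖e‖ ≤ C * h₀ ^ ((1:ℝ)/2) * ‖e‖ := by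
      simpa [hEp0] using h3
    have h5 : C * h₀ ^ ((1:ℝ)/2) ≤ 0 :=
      mul_nonpos_of_nonpos_of_nonneg hCn (Real.rpow_nonneg hh₀.1.le _)
    rw [hne] at h4
    nlinarith
  -- Choose h₁
  set δ : ℝ := min (1 / (2 * C)) (c₀ / (4 * C ^ 2)) with hδdef
  have hδpos : 0 < δ := by
    apply lt_min <;> positivity
  refine ⟨c₀ / (4 * C ^ 2), by positivity, min h₀ (δ ^ 2), lt_min hh₀.1 (by positivity), ?_⟩
  intro h hp hle um
  have hle₀ : h ≤ h₀ := hle.trans (min_le_left _ _)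
  have hIoc : h ∈ Set.Ioc (0 : ℝ) 1 := ⟨hp, hle₀.trans hh₀.2⟩
  have hsq : h ^ ((1:ℝ)/2) ≤ δ := by
    have h1 : h ^ ((1:ℝ)/2) ≤ (δ ^ 2) ^ ((1:ℝ)/2) :=
      Real.rpow_le_rpow hp.le (hle.trans (min_le_right _ _)) (by norm_num)
    calc h ^ ((1:ℝ)/2) ≤ (δ ^ 2) ^ ((1:ℝ)/2) := h1
      _ = δ := by
          rw [← Real.rpow_natCast δ 2, ← Real.rpow_mul hδpos.le]
          norm_num
  have hδ1 : C * h ^ ((1:ℝ)/2) ≤ 1 / 2 := by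
    have := mul_le_mul_of_nonneg_left (hsq.trans (min_le_left _ _)) hC.le
    calc C * h ^ ((1:ℝ)/2) ≤ C * (1 / (2 * C)) := this
      _ = 1 / 2 := by field_simp
  have hδ2 : C * h ^ ((1:ℝ)/2) ≤ c₀ / (4 * C) := by
    have := mul_le_mul_of_nonneg_left (hsq.trans (min_le_right _ _)) hC.le
    calc C * h ^ ((1:ℝ)/2) ≤ C * (c₀ / (4 * C ^ 2)) := this
      _ = c₀ / (4 * C) := by field_simp
  set a : ℝ := (N₀ : ℝ) / 2 + 1 with hadef
  have hapos : (0:ℝ) ≤ h ^ a := Real.rpow_nonneg hp.le _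
  have hhalfpos : (0:ℝ) ≤ h ^ ((1:ℝ)/2) := Real.rpow_nonneg hp.le _
  -- Step 1 : ‖um‖ ≤ C‖Ep um‖ + C h^{1/2} ‖um‖
  have h1 : ‖um‖ ≤ C * ‖Ep h um‖ + C * h ^ ((1:ℝ)/2) * ‖um‖ := by
    have hA : ‖((Rp h).comp (Ep h) - ContinuousLinearMap.id ℂ (EuclideanSpace ℂ (Fin d))) um‖
        ≤ C * h ^ ((1:ℝ)/2) * ‖um‖ :=
      ContinuousLinearMap.le_of_opNorm_le _ (hii h hIoc) um
    have hB : ‖Rp h (Ep h um)‖ ≤ C * ‖Ep h um‖ :=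
      le_trans ((Rp h).le_opNorm _) (mul_le_mul_of_nonneg_right (hRp h hIoc) (norm_nonneg _))
    calc ‖um‖ = ‖Rp h (Ep h um) - (Rp h (Ep h um) - um)‖ := by rw [sub_sub_cancel]
      _ ≤ ‖Rp h (Ep h um)‖ + ‖Rp h (Ep h um) - um‖ := norm_sub_le _ _
      _ ≤ C * ‖Ep h um‖ + C * h ^ ((1:ℝ)/2) * ‖um‖ := by
          refine add_le_add hB ?_
          simpa using hA
  -- Step 2
  have h2 : c₀ * h ^ a * ‖Ep h um‖ ≤ C * h ^ ((1:ℝ)/2) * (h ^ a * ‖um‖) + C * ‖Epm h um‖ := by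
    have hap := hapriori h hp hle₀ (Ep h um)
    have hA : ‖((P h).comp (Ep h) + (Rm h).comp (Epm h)) um‖
        ≤ C * h ^ ((N₀:ℝ)/2 + 3/2) * ‖um‖ :=
      ContinuousLinearMap.le_of_opNorm_le _ (hi h hIoc) um
    have hB : ‖Rm h (Epm h um)‖ ≤ C * ‖Epm h um‖ :=
      le_trans ((Rm h).le_opNorm _) (mul_le_mul_of_nonneg_right (hRm h hIoc) (norm_nonneg _))
    have hsplit : h ^ ((N₀:ℝ)/2 + 3/2) = h ^ ((1:ℝ)/2) * h ^ a := by
      rw [← Real.rpow_add hp]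
      congr 1
      simp [hadef]
      ring
    have hchain : ‖P h (Ep h um)‖
        ≤ C * h ^ ((1:ℝ)/2) * (h ^ a * ‖um‖) + C * ‖Epm h um‖ := by
      calc ‖P h (Ep h um)‖
          = ‖((P h).comp (Ep h) + (Rm h).comp (Epm h)) um - Rm h (Epm h um)‖ := by
            simp
        _ ≤ ‖((P h).comp (Ep h) + (Rm h).comp (Epm h)) um‖ + ‖Rm h (Epm h um)‖ :=
            norm_sub_le _ _
        _ ≤ C * h ^ ((N₀:ℝ)/2 + 3/2) * ‖um‖ + C * ‖Epm h um‖ := add_le_add hA hB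
        _ = C * h ^ ((1:ℝ)/2) * (h ^ a * ‖um‖) + C * ‖Epm h um‖ := by
            rw [hsplit]; ring
    exact hap.trans hchain
  -- Combine
  have hum : ‖um‖ ≤ 2 * C * ‖Ep h um‖ := by
    nlinarith [mul_le_mul_of_nonneg_right hδ1 (norm_nonneg um)]
  have key : c₀ * h ^ a * ‖um‖
      ≤ 2 * C * (C * h ^ ((1:ℝ)/2) * (h ^ a * ‖um‖) + C * ‖Epm h um‖) := by
    calc c₀ * h ^ a * ‖um‖ ≤ c₀ * h ^ a * (2 * C * ‖Ep h um‖) :=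
          mul_le_mul_of_nonneg_left hum (by positivity)
      _ = 2 * C * (c₀ * h ^ a * ‖Ep h um‖) := by ring
      _ ≤ _ := mul_le_mul_of_nonneg_left h2 (by positivity)
  have hbound : 2 * C * (C * h ^ ((1:ℝ)/2) * (h ^ a * ‖um‖))
      ≤ (c₀ / 2) * (h ^ a * ‖um‖) := by
    have := mul_le_mul_of_nonneg_right hδ2 (mul_nonneg hapos (norm_nonneg um))
    calc 2 * C * (C * h ^ ((1:ℝ)/2) * (h ^ a * ‖um‖))
        = 2 * C * (C * h ^ ((1:ℝ)/2) * (h ^ a * ‖um‖)) := rfl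
      _ ≤ 2 * C * (c₀ / (4 * C) * (h ^ a * ‖um‖)) := by
          apply mul_le_mul_of_nonneg_left _ (by positivity)
          exact this
      _ = (c₀ / 2) * (h ^ a * ‖um‖) := by field_simp; ring
  rw [div_mul_eq_mul_div, div_mul_eq_mul_div, div_le_iff₀ (by positivity)]
  nlinarith [key, hbound, mul_nonneg hapos (norm_nonneg um), norm_nonneg (Epm h um)]
end

section
/- Let P(h) : H → H, E₋(h) : H → ℂ^d, R₊ : H → ℂ^d, E_±(h) : ℂ^d → ℂ^d be families of bounded operators with ‖E₋‖ ≤ C uniformly, satisfying ‖E₋ P + E_± R₊‖_{L(H,ℂ^d)} ≤ C h^{N₀/2+3/2}. Suppose additionally the estimate h‖u‖ ≤ C(‖Pu‖ + h|R₊u|) holds for all u and small h, and that |E_± v| ≥ c₀ h^{N₀/2+1}|v| for all v ∈ ℂ^d. Then there exist c₁, h₁ > 0 with ‖Pu‖ ≥ c₁ h^{N₀/2+1}‖u‖ for all u ∈ H and 0 < h ≤ h₁. -/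
/-- Abstract converse Grushin step: if `‖E₋ P + E_± R₊‖ = O(h^{N₀/2+3/2})`,
`‖E₋‖ ≤ C` uniformly, the estimate `h‖u‖ ≤ C(‖Pu‖ + h|R₊u|)` holds, and
`|E_± v| ≥ c₀ h^{N₀/2+1}|v|`, then `‖Pu‖ ≥ c₁ h^{N₀/2+1}‖u‖` for small `h`. -/
theorem grushin_estimate_converse
    {H : Type*} [NormedAddCommGroup H] [NormedSpace ℂ H]
    (d : ℕ) (N₀ : ℕ) (hN₀ : 1 ≤ N₀)
    (P : ℝ → (H →L[ℂ] H))
    (Em : ℝ → (H →L[ℂ] EuclideanSpace ℂ (Fin d)))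
    (Rp : ℝ → (H →L[ℂ] EuclideanSpace ℂ (Fin d)))
    (Epm : ℝ → (EuclideanSpace ℂ (Fin d) →L[ℂ] EuclideanSpace ℂ (Fin d)))
    (C : ℝ)
    (hEm : ∀ h ∈ Set.Ioc (0 : ℝ) 1, ‖Em h‖ ≤ C)
    (hcomp : ∀ h ∈ Set.Ioc (0 : ℝ) 1,
      ‖(Em h).comp (P h) + (Epm h).comp (Rp h)‖
        ≤ C * h ^ ((N₀ : ℝ) / 2 + 3 / 2))
    (h₀ : ℝ) (hh₀ : h₀ ∈ Set.Ioc (0 : ℝ) 1)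
    (hest : ∀ h, 0 < h → h ≤ h₀ → ∀ u : H,
      h * ‖u‖ ≤ C * (‖P h u‖ + h * ‖Rp h u‖))
    (c₀ : ℝ) (hc₀ : 0 < c₀)
    (hEpm : ∀ h, 0 < h → h ≤ h₀ → ∀ v : EuclideanSpace ℂ (Fin d),
      c₀ * h ^ ((N₀ : ℝ) / 2 + 1) * ‖v‖ ≤ ‖Epm h v‖) :
    ∃ c₁ > 0, ∃ h₁ > 0, ∀ h, 0 < h → h ≤ h₁ → ∀ u : H,
      c₁ * h ^ ((N₀ : ℝ) / 2 + 1) * ‖u‖ ≤ ‖P h u‖ := by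
  set M := max C 1 with hMdef
  have hM1 : (1:ℝ) ≤ M := le_max_right _ _
  have hM0 : (0:ℝ) < M := lt_of_lt_of_le one_pos hM1
  have hCM : C ≤ M := le_max_left _ _
  set ε : ℝ := c₀ / (2 * M ^ 2) with hεdef
  have hε0 : 0 < ε := by positivity
  have hK : (0:ℝ) < M * c₀ + M ^ 2 := by positivity
  refine ⟨c₀ / (2 * (M * c₀ + M ^ 2)), by positivity,
    min h₀ (min 1 (ε ^ 2)), lt_min hh₀.1 (lt_min one_pos (by positivity)), ?_⟩
  intro h hpos hle u
  have hle0 : h ≤ h₀ := le_trans hle (min_le_left _ _)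
  have hle1 : h ≤ 1 := le_trans hle (le_trans (min_le_right _ _) (min_le_left _ _))
  have hleε : h ≤ ε ^ 2 := le_trans hle (le_trans (min_le_right _ _) (min_le_right _ _))
  have hI : h ∈ Set.Ioc (0:ℝ) 1 := ⟨hpos, hle1⟩
  set s : ℝ := h ^ ((1:ℝ)/2) with hsdef
  set t : ℝ := h ^ ((N₀:ℝ)/2) with htdef
  set β : ℝ := h ^ ((N₀:ℝ)/2 + 1) with hβdef
  have hs0 : 0 ≤ s := Real.rpow_nonneg hpos.le _
  have ht0 : 0 ≤ t := Real.rpow_nonneg hpos.le _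
  have hβ0 : 0 ≤ β := Real.rpow_nonneg hpos.le _
  have hβth : β = t * h := by
    rw [hβdef, htdef, Real.rpow_add hpos, Real.rpow_one]
  have ht1 : t ≤ 1 := Real.rpow_le_one hpos.le hle1 (by positivity)
  have hsε : s ≤ ε := by
    have h1 : s ≤ (ε ^ 2) ^ ((1:ℝ)/2) := Real.rpow_le_rpow hpos.le hleε (by norm_num)
    have h2 : (ε ^ 2 : ℝ) ^ ((1:ℝ)/2) = ε := by
      rw [← Real.rpow_natCast ε 2, ← Real.rpow_mul hε0.le]
      norm_num
    rw [h2] at h1; exact h1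
  have hγ : h ^ ((N₀:ℝ)/2 + 3/2) = β * s := by
    rw [hβdef, hsdef, ← Real.rpow_add hpos]
    congr 1
    ring
  -- abbreviations
  set A := ‖P h u‖ with hA
  set R := ‖Rp h u‖ with hR
  set U := ‖u‖ with hU
  have hA0 : 0 ≤ A := norm_nonneg _
  have hR0 : 0 ≤ R := norm_nonneg _
  have hU0 : 0 ≤ U := norm_nonneg _
  -- (i) composed operator estimate
  have e1 : ‖Em h (P h u) + Epm h (Rp h u)‖ ≤ M * (β * s) * U := by
    have h1 := ((Em h).comp (P h) + (Epm h).comp (Rp h)).le_opNorm u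
    simp only [ContinuousLinearMap.add_apply, ContinuousLinearMap.comp_apply] at h1
    calc ‖Em h (P h u) + Epm h (Rp h u)‖
        ≤ ‖(Em h).comp (P h) + (Epm h).comp (Rp h)‖ * U := h1
      _ ≤ (C * h ^ ((N₀:ℝ)/2 + 3/2)) * U :=
          mul_le_mul_of_nonneg_right (hcomp h hI) hU0
      _ ≤ M * (β * s) * U := by
          rw [hγ]
          have : C * (β * s) ≤ M * (β * s) :=
            mul_le_mul_of_nonneg_right hCM (by positivity)
          exact mul_le_mul_of_nonneg_right this hU0
  -- Em bound
  have e0 : ‖Em h (P h u)‖ ≤ M * A := by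
    calc ‖Em h (P h u)‖ ≤ ‖Em h‖ * A := (Em h).le_opNorm _
      _ ≤ M * A := mul_le_mul_of_nonneg_right (le_trans (hEm h hI) hCM) hA0
  -- (ii)
  have e2 : ‖Epm h (Rp h u)‖ ≤ M * A + M * (β * s) * U := by
    have : Epm h (Rp h u) = (Em h (P h u) + Epm h (Rp h u)) - Em h (P h u) := by abel
    rw [this]
    calc ‖(Em h (P h u) + Epm h (Rp h u)) - Em h (P h u)‖
        ≤ ‖Em h (P h u) + Epm h (Rp h u)‖ + ‖Em h (P h u)‖ := norm_sub_le _ _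
      _ ≤ M * (β * s) * U + M * A := add_le_add e1 e0
      _ = M * A + M * (β * s) * U := by ring
  have e3 : c₀ * β * R ≤ M * A + M * (β * s) * U :=
    le_trans (hEpm h hpos hle0 (Rp h u)) e2
  -- (iii)
  have e4 : h * U ≤ M * (A + h * R) := by
    refine le_trans (hest h hpos hle0 u) (mul_le_mul_of_nonneg_right hCM ?_)
    positivity
  clear_value s t β A R U
  -- multiply e4 by c₀ * t
  have e5 : c₀ * β * U ≤ c₀ * t * M * A + M * (c₀ * β * R) := by
    calc c₀ * β * U = c₀ * t * (h * U) := by rw [hβth]; ring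
      _ ≤ c₀ * t * (M * (A + h * R)) :=
          mul_le_mul_of_nonneg_left e4 (by positivity)
      _ = c₀ * t * M * A + M * (c₀ * β * R) := by rw [hβth]; ring
  -- combine
  have e6 : c₀ * β * U ≤ (c₀ * M + M ^ 2) * A + M ^ 2 * s * (β * U) := by
    have h5 : c₀ * t * M * A ≤ c₀ * M * A := by
      calc c₀ * t * M * A = t * (c₀ * M * A) := by ring
        _ ≤ 1 * (c₀ * M * A) :=
            mul_le_mul_of_nonneg_right ht1 (by positivity)
        _ = c₀ * M * A := by ring
    have h6 : M * (c₀ * β * R) ≤ M ^ 2 * A + M ^ 2 * s * (β * U) := by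
      calc M * (c₀ * β * R) ≤ M * (M * A + M * (β * s) * U) :=
            mul_le_mul_of_nonneg_left e3 hM0.le
        _ = M ^ 2 * A + M ^ 2 * s * (β * U) := by ring
    linarith [e5, h5, h6]
  have e7 : M ^ 2 * s * (β * U) ≤ (c₀ / 2) * (β * U) := by
    have h7 : M ^ 2 * s ≤ c₀ / 2 := by
      have := mul_le_mul_of_nonneg_left hsε (by positivity : (0:ℝ) ≤ M ^ 2)
      rw [hεdef] at this
      calc M ^ 2 * s ≤ M ^ 2 * (c₀ / (2 * M ^ 2)) := this
        _ = c₀ / 2 := by field_simp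
    exact mul_le_mul_of_nonneg_right h7 (by positivity)
  have e8 : c₀ * (β * U) ≤ 2 * ((M * c₀ + M ^ 2) * A) := by linarith [e6, e7]
  rw [div_mul_eq_mul_div, div_mul_eq_mul_div, div_le_iff₀ (by positivity)]
  linarith [e8]
end
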